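/- Let α > 0 with α ≠ 1. Let p(θ, D) be a positive joint density over parameters θ (for a fixed dataset D), let p(D) = ∫ p(θ, D) dθ ∈ (0, ∞) be the marginal likelihood, and let p(θ|D) = p(θ, D)/p(D) be the posterior density. Let q be a positive probability density over θ such that E_{θ∼q}[(p(θ, D)/q(θ))^{1−α}] ∈ (0, ∞). Then the variational Rényi bound satisfies L_α(q; D) := (1/(1−α))·log E_{θ∼q}[(p(θ, D)/q(θ))^{1−α}] = log p(D) − D_α(q‖p(·|D)). -/

import Mathlib

/-!
The identity holds already at the level of integrands: since the posterior is `p(θ, D) / p(D)`,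
`q^α (p(θ, D) / p(D))^(1-α) = q (p(θ, D) / q)^(1-α) · p(D)^(α-1)`. Integrating, the Rényi integral
is the VR expectation times the constant `p(D)^(α-1)`, and taking logarithms turns that factor
into the summand `log p(D)`.
-/

open MeasureTheory

theorem Real.rpow_mul_div_rpow_one_sub {q p c : ℝ} (hq : 0 < q) (hp : 0 ≤ p) (hc : 0 < c)
    (α : ℝ) : q ^ α * (p / c) ^ (1 - α) = q * (p / q) ^ (1 - α) * c ^ (α - 1) := by
  have hqα : q ^ α = q / q ^ (1 - α) := by
    simpa only [sub_sub_cancel, Real.rpow_one] using Real.rpow_sub hq 1 (1 - α)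
  have hcα : c ^ (α - 1) = (c ^ (1 - α))⁻¹ := by
    rw [← Real.rpow_neg hc.le, neg_sub]
  rw [Real.div_rpow hp hc.le, Real.div_rpow hp hq.le, hqα, hcα]
  ring

theorem integral_rpow_mul_div_rpow_one_sub {Θ : Type*} [MeasurableSpace Θ] (μ : Measure Θ)
    {q p : Θ → ℝ} {c : ℝ} (hq : ∀ θ, 0 < q θ) (hp : ∀ θ, 0 ≤ p θ) (hc : 0 < c) (α : ℝ) :
    ∫ θ, q θ ^ α * (p θ / c) ^ (1 - α) ∂μ
      = (∫ θ, q θ * (p θ / q θ) ^ (1 - α) ∂μ) * c ^ (α - 1) := by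
  simp_rw [Real.rpow_mul_div_rpow_one_sub (hq _) (hp _) hc α, integral_mul_const]

theorem one_div_one_sub_mul_log_eq {E c α : ℝ} (hE : 0 < E) (hc : 0 < c) (hα : α ≠ 1) :
    1 / (1 - α) * Real.log E = Real.log c - 1 / (α - 1) * Real.log (E * c ^ (α - 1)) := by
  have hα₁ : α - 1 ≠ 0 := sub_ne_zero.mpr hα
  have hα₂ : 1 - α ≠ 0 := sub_ne_zero.mpr hα.symm
  rw [Real.log_mul hE.ne' (Real.rpow_pos_of_pos hc _).ne', Real.log_rpow hc]
  field_simp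
  ring

theorem vr_bound_eq_log_evidence_sub_renyi_general
    {Θ : Type*} [MeasurableSpace Θ] (μ : Measure Θ)
    (α : ℝ) (hα_ne : α ≠ 1)
    (pjoint q : Θ → ℝ) (pD : ℝ)
    (hpj_pos : ∀ θ, 0 < pjoint θ)
    (hpD_pos : 0 < pD)
    (hq_pos : ∀ θ, 0 < q θ)
    -- `E_{θ∼q}[(pjoint θ / q θ)^(1-α)] ∈ (0, ∞)`
    (hE_pos : 0 < ∫ θ, q θ * (pjoint θ / q θ) ^ (1 - α) ∂μ) :
    (1 / (1 - α)) * Real.log (∫ θ, q θ * (pjoint θ / q θ) ^ (1 - α) ∂μ)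
      = Real.log pD
        - (1 / (α - 1)) * Real.log (∫ θ, q θ ^ α * (pjoint θ / pD) ^ (1 - α) ∂μ) := by
  rw [integral_rpow_mul_div_rpow_one_sub μ hq_pos (fun θ => (hpj_pos θ).le) hpD_pos α]
  exact one_div_one_sub_mul_log_eq hE_pos hpD_pos hα_ne

/-- **The variational Rényi (VR) bound identity.**
Let `α > 0`, `α ≠ 1`.  Let `pjoint θ = p(θ, D)` be a positive joint density over
parameters `θ` (for a fixed dataset `D`), `pD = ∫ pjoint θ dμ(θ) ∈ (0,∞)` the marginal
likelihood, and `p(θ|D) = pjoint θ / pD` the posterior.  For a positive probability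
density `q` with `E_{θ∼q}[(pjoint θ / q θ)^(1-α)] ∈ (0,∞)`, the VR bound satisfies
`L_α(q; D) = (1/(1-α)) log E_{θ∼q}[(p(θ,D)/q(θ))^(1-α)] = log p(D) - D_α(q ‖ p(·|D))`,
where `D_α(q‖p) = (1/(α-1)) log ∫ q(θ)^α p(θ)^(1-α) dθ` is Rényi's α-divergence. -/
theorem vr_bound_eq_log_evidence_sub_renyi
    {Θ : Type*} [MeasurableSpace Θ] (μ : Measure Θ)
    (α : ℝ) (hα_pos : 0 < α) (hα_ne : α ≠ 1)
    (pjoint q : Θ → ℝ) (pD : ℝ)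
    (hpj_pos : ∀ θ, 0 < pjoint θ)
    (hpD_def : pD = ∫ θ, pjoint θ ∂μ)
    (hpD_pos : 0 < pD)
    (hq_pos : ∀ θ, 0 < q θ)
    (hq_prob : ∫ θ, q θ ∂μ = 1)
    (hq_meas : AEMeasurable q μ) (hpj_meas : AEMeasurable pjoint μ)
    -- `E_{θ∼q}[(pjoint θ / q θ)^(1-α)] ∈ (0, ∞)`
    (hE_int : Integrable (fun θ => q θ * (pjoint θ / q θ) ^ (1 - α)) μ)
    (hE_pos : 0 < ∫ θ, q θ * (pjoint θ / q θ) ^ (1 - α) ∂μ) :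
    (1 / (1 - α)) * Real.log (∫ θ, q θ * (pjoint θ / q θ) ^ (1 - α) ∂μ)
      = Real.log pD
        - (1 / (α - 1)) * Real.log (∫ θ, q θ ^ α * (pjoint θ / pD) ^ (1 - α) ∂μ) :=
  vr_bound_eq_log_evidence_sub_renyi_general μ α hα_ne pjoint q pD hpj_pos hpD_pos hq_pos hE_pos
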